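/- arXiv:2008.10180 — 3 statements merged into one kernel-verified Lean document; each statement's English description precedes it below -/
import Mathlib

section
/- Let Z ⊆ ℝ^d be a nonempty compact set, f : ℝ^d → ℝ^n a continuous map, X := f(Z), and let (z^j)_{j≥1} be an i.i.d. sequence on a probability space (Ω, 𝒜, ℙ) with common law μ, where μ is a Borel probability measure on ℝ^d with μ(Z) = 1 and μ(f⁻¹(G)) > 0 for every open set G ⊆ ℝ^n with G ∩ X ≠ ∅. For each m ≥ 1 define the random convex hull 𝒳^m(ω) := convexHull{f(z^1(ω)), …, f(z^m(ω))}. Then there is an event of probability one on which the closure of ⋃_{m≥1} 𝒳^m(ω) equals the convex hull convexHull(X) of the reachable set; in particular, the sampled convex hulls converge to convexHull(X) as m → ∞ almost surely. -/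
/-!
Almost surely every sample lies in `Z`, and, by the second Borel–Cantelli lemma applied to each of
the countably many basic open sets meeting `X`, the samples `f (z j ω)` are dense in `X`. The union
of the hulls of the first `m` samples is the convex hull of all samples, so its closure lies between
`convexHull ℝ X` and the closure of that set; the two agree because, by Carathéodory, the convex
hull of a compact set in finite dimension is compact.
-/

open MeasureTheory Set

theorem convexHull_range_eq_image_stdSimplex {𝕜 E ι : Type*} [Field 𝕜] [LinearOrder 𝕜]
    [IsStrictOrderedRing 𝕜] [AddCommGroup E] [Module 𝕜 E] [Fintype ι] (v : ι → E) :
    convexHull 𝕜 (range v) = (fun w : ι → 𝕜 => ∑ i, w i • v i) '' stdSimplex 𝕜 ι := by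
  classical
  have hv : (fun w : ι → 𝕜 => ∑ i, w i • v i) = Fintype.linearCombination 𝕜 v := by
    ext w
    rw [Fintype.linearCombination_apply]
  rw [hv, ← convexHull_basis_eq_stdSimplex, LinearMap.image_convexHull, ← range_comp]
  congr 2
  ext i
  simp [Fintype.linearCombination_apply, ite_smul]

theorem IsCompact.convexHull {E : Type*} [AddCommGroup E] [Module ℝ E] [TopologicalSpace E]
    [ContinuousAdd E] [ContinuousSMul ℝ E] [FiniteDimensional ℝ E] {s : Set E}
    (hs : IsCompact s) : IsCompact (convexHull ℝ s) := by
  set N := Module.finrank ℝ E + 1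
  suffices _root_.convexHull ℝ s =
      (fun p : (Fin N → ℝ) × (Fin N → E) => ∑ i, p.1 i • p.2 i) ''
        (stdSimplex ℝ (Fin N) ×ˢ univ.pi fun _ => s) by
    rw [this]
    exact ((isCompact_stdSimplex ℝ _).prod (isCompact_univ_pi fun _ => hs)).image (by fun_prop)
  refine Subset.antisymm ?_ ?_
  · rw [convexHull_eq_union]
    simp only [iUnion_subset_iff]
    intro t hts hti x hx
    have : Nonempty t := (convexHull_nonempty_iff.1 ⟨x, hx⟩).to_subtype
    have hcard : Fintype.card t ≤ Fintype.card (Fin N) := by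
      simpa [N] using hti.card_le_finrank_succ.trans (Nat.succ_le_succ (Submodule.finrank_le _))
    obtain ⟨e⟩ := Function.Embedding.nonempty_of_card_le hcard
    -- list the points of `t` as a family indexed by `Fin N`, repeating some if needed
    have hv : range ((↑) ∘ Function.invFun e : Fin N → E) = t := by
      rw [range_comp, (Function.invFun_surjective e.injective).range_eq, image_univ,
        Subtype.range_coe]
    rw [← hv, convexHull_range_eq_image_stdSimplex] at hx
    obtain ⟨w, hw, rfl⟩ := hx
    exact ⟨(w, _), ⟨hw, fun i _ => hts (Subtype.prop _)⟩, rfl⟩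
  · rintro _ ⟨⟨w, v⟩, ⟨hw, hv⟩, rfl⟩
    refine convexHull_mono (range_subset_iff.2 fun i => hv i trivial) ?_
    rw [convexHull_range_eq_image_stdSimplex]
    exact ⟨w, hw, rfl⟩

theorem iUnion_convexHull_image_Iic {𝕜 E : Type*} [Semiring 𝕜] [PartialOrder 𝕜]
    [AddCommMonoid E] [Module 𝕜 E] (s : ℕ → E) :
    ⋃ m, convexHull 𝕜 (s '' Iic m) = convexHull 𝕜 (range s) := by
  refine Subset.antisymm (iUnion_subset fun m => convexHull_mono (image_subset_range _ _)) ?_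
  refine convexHull_min (fun _ ⟨j, hj⟩ =>
    mem_iUnion.2 ⟨j, subset_convexHull 𝕜 _ ⟨j, mem_Iic.2 le_rfl, hj⟩⟩) ?_
  refine Directed.convex_iUnion ?_ fun m => convex_convexHull 𝕜 _
  exact Monotone.directed_le fun a b hab => convexHull_mono (image_mono (Iic_subset_Iic.2 hab))

theorem closure_iUnion_convexHull_image_Iic {E : Type*} [AddCommGroup E] [Module ℝ E]
    [TopologicalSpace E] [IsTopologicalAddGroup E] [ContinuousSMul ℝ E] {s : ℕ → E} {X : Set E}
    (hsX : range s ⊆ X) (hXs : X ⊆ closure (range s)) (hX : IsClosed (convexHull ℝ X)) :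
    closure (⋃ m, convexHull ℝ (s '' Iic m)) = convexHull ℝ X := by
  rw [iUnion_convexHull_image_Iic]
  exact Subset.antisymm (closure_minimal (convexHull_mono hsX) hX)
    (convexHull_min (hXs.trans (closure_mono (subset_convexHull ℝ _)))
      (convex_convexHull ℝ _).closure)

namespace ProbabilityTheory

variable {Ω β : Type*} [MeasurableSpace Ω] [MeasurableSpace β] {P : Measure Ω} {μ : Measure β}
  {z : ℕ → Ω → β}

theorem iIndepFun.iIndepSet_preimage (hindep : iIndepFun z P) {E : Set β}
    (hE : MeasurableSet E) : iIndepSet (fun j => z j ⁻¹' E) P :=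
  (iIndepSet_iff_iIndep _ _).2 <| iIndep_of_iIndep_of_le hindep.iIndep fun _ =>
    MeasurableSpace.generateFrom_le fun _ hs => hs ▸ ⟨E, hE, rfl⟩

theorem iIndepFun.ae_exists_mem (hmeas : ∀ j, Measurable (z j))
    (hindep : iIndepFun z P) (hlaw : ∀ j, P.map (z j) = μ) {E : Set β} (hE : MeasurableSet E)
    (hμE : μ E ≠ 0) : ∀ᵐ ω ∂P, ∃ j, z j ω ∈ E := by
  have := hindep.isProbabilityMeasure
  have hpre : ∀ j, P (z j ⁻¹' E) = μ E := fun j => by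
    rw [← hlaw j, Measure.map_apply (hmeas j) hE]
  have hlimsup : P (Filter.limsup (fun j => z j ⁻¹' E) Filter.atTop) = 1 :=
    measure_limsup_eq_one (fun j => hmeas j hE) (hindep.iIndepSet_preimage hE)
      (by simpa only [hpre] using ENNReal.tsum_const_eq_top_of_ne_zero hμE)
  have hae : ∀ᵐ ω ∂P, ω ∈ Filter.limsup (fun j => z j ⁻¹' E) Filter.atTop :=
    (ae_mem_iff_measure_eq
      (MeasurableSet.measurableSet_limsup fun j => hmeas j hE).nullMeasurableSet).2
      (by rw [hlimsup, measure_univ])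
  filter_upwards [hae] with ω hω
  exact (Filter.mem_limsup_iff_frequently_mem.1 hω).exists

theorem iIndepFun.ae_subset_closure_range {Y : Type*} [TopologicalSpace Y]
    [SecondCountableTopology Y] [MeasurableSpace Y] [OpensMeasurableSpace Y] {w : ℕ → Ω → Y}
    {ν : Measure Y} (hmeas : ∀ j, Measurable (w j)) (hindep : iIndepFun w P)
    (hlaw : ∀ j, P.map (w j) = ν) {X : Set Y}
    (hν : ∀ G, IsOpen G → (G ∩ X).Nonempty → ν G ≠ 0) :
    ∀ᵐ ω ∂P, X ⊆ closure (range fun j => w j ω) := by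
  set B := TopologicalSpace.countableBasis Y
  have hB := TopologicalSpace.isBasis_countableBasis Y
  have hhit : ∀ᵐ ω ∂P, ∀ G ∈ {G ∈ B | (G ∩ X).Nonempty}, ∃ j, w j ω ∈ G := by
    refine (ae_ball_iff ((TopologicalSpace.countable_countableBasis Y).mono
      (sep_subset _ _))).2 fun G hG => ?_
    exact hindep.ae_exists_mem hmeas hlaw (hB.isOpen hG.1).measurableSet
      (hν G (hB.isOpen hG.1) hG.2)
  filter_upwards [hhit] with ω hω x hx
  refine hB.mem_closure_iff.2 fun G hG hxG => ?_
  obtain ⟨j, hj⟩ := hω G ⟨hG, x, hxG, hx⟩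
  exact ⟨w j ω, hj, j, rfl⟩

end ProbabilityTheory

theorem MeasureTheory.exists_measurableSet_measure_eq_one_of_ae {Ω : Type*} [MeasurableSpace Ω]
    {P : Measure Ω} [IsProbabilityMeasure P] {p : Ω → Prop} (h : ∀ᵐ ω ∂P, p ω) :
    ∃ A, MeasurableSet A ∧ P A = 1 ∧ ∀ ω ∈ A, p ω := by
  obtain ⟨A, hAae, hAm, hA⟩ := h.exists_measurable_mem
  exact ⟨A, hAm, (prob_compl_eq_zero_iff hAm).1 (mem_ae_iff.1 hAae), hA⟩

theorem randUP_convergence_general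
    {d n : ℕ}
    (Z : Set (Fin d → ℝ)) (hZc : IsCompact Z)
    (f : (Fin d → ℝ) → (Fin n → ℝ)) (hf : Continuous f)
    (X : Set (Fin n → ℝ)) (hX : X = f '' Z)
    {Ω : Type*} [MeasurableSpace Ω] (ℙ : Measure Ω)
    (μ : Measure (Fin d → ℝ))
    (z : ℕ → Ω → (Fin d → ℝ))
    (hmeas : ∀ j, Measurable (z j))
    (hindep : ProbabilityTheory.iIndepFun z ℙ)
    (hlaw : ∀ j, Measure.map (z j) ℙ = μ)
    (hμZ : μ Z = 1)
    (hμG : ∀ G : Set (Fin n → ℝ), IsOpen G → (G ∩ X).Nonempty → 0 < μ (f ⁻¹' G)) :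
    ∃ A : Set Ω, MeasurableSet A ∧ ℙ A = 1 ∧
      ∀ ω ∈ A,
        closure (⋃ m : ℕ, convexHull ℝ ((fun j => f (z j ω)) '' Set.Iic m)) =
          convexHull ℝ X := by
  have hfz : ∀ j, Measurable (f ∘ z j) := fun j => hf.measurable.comp (hmeas j)
  have hdense : ∀ᵐ ω ∂ℙ, X ⊆ closure (range fun j => f (z j ω)) :=
    (hindep.comp (fun _ => f) fun _ => hf.measurable).ae_subset_closure_range hfz
      (fun j => by rw [← Measure.map_map hf.measurable (hmeas j), hlaw])
      fun G hG hGX => by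
        rw [Measure.map_apply hf.measurable hG.measurableSet]
        exact (hμG G hG hGX).ne'
  have := hindep.isProbabilityMeasure
  have hZ : ∀ᵐ ω ∂ℙ, ∀ j, z j ω ∈ Z := ae_all_iff.2 fun j =>
    have hZm := hZc.isClosed.measurableSet
    (ae_mem_iff_measure_eq (hmeas j hZm).nullMeasurableSet).2 <| by
      rw [← Measure.map_apply (hmeas j) hZm, hlaw, hμZ, measure_univ]
  obtain ⟨A, hAm, hA1, hA⟩ := exists_measurableSet_measure_eq_one_of_ae (hdense.and hZ)
  refine ⟨A, hAm, hA1, fun ω hω => ?_⟩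
  obtain ⟨hXω, hZω⟩ := hA ω hω
  exact closure_iUnion_convexHull_image_Iic
    (range_subset_iff.2 fun j => hX ▸ mem_image_of_mem f (hZω j)) hXω
    (hX ▸ hZc.image hf).convexHull.isClosed

/-- Theorem 2 of the paper (convergence of random convex hulls produced by randUP):
the closure of the union of the sampled convex hulls almost surely equals the
convex hull of the reachable set `X = f '' Z`. -/
theorem randUP_convergence
    {d n : ℕ}
    (Z : Set (Fin d → ℝ)) (hZne : Z.Nonempty) (hZc : IsCompact Z)
    (f : (Fin d → ℝ) → (Fin n → ℝ)) (hf : Continuous f)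
    (X : Set (Fin n → ℝ)) (hX : X = f '' Z)
    {Ω : Type*} [MeasurableSpace Ω] (ℙ : Measure Ω) [IsProbabilityMeasure ℙ]
    (μ : Measure (Fin d → ℝ)) [IsProbabilityMeasure μ]
    (z : ℕ → Ω → (Fin d → ℝ))
    (hmeas : ∀ j, Measurable (z j))
    (hindep : ProbabilityTheory.iIndepFun z ℙ)
    (hlaw : ∀ j, Measure.map (z j) ℙ = μ)
    (hμZ : μ Z = 1)
    (hμG : ∀ G : Set (Fin n → ℝ), IsOpen G → (G ∩ X).Nonempty → 0 < μ (f ⁻¹' G)) :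
    ∃ A : Set Ω, MeasurableSet A ∧ ℙ A = 1 ∧
      ∀ ω ∈ A,
        closure (⋃ m : ℕ, convexHull ℝ ((fun j => f (z j ω)) '' Set.Iic m)) =
          convexHull ℝ X :=
  randUP_convergence_general Z hZc f hf X hX ℙ μ z hmeas hindep hlaw hμZ hμG
end

section
/- Let (Ω, 𝒜, ℙ) be a probability space and for each m ≥ 1 let 𝒳^m : Ω → Set(ℝ^n) be a random closed set (each 𝒳^m(ω) is closed and {ω : 𝒳^m(ω) ∩ K ≠ ∅} ∈ 𝒜 for every compact K ⊆ ℝ^n). Let X ⊆ ℝ^n be a deterministic closed set. Then the following are equivalent: (a) there is a measurable event of probability one on which the sequence 𝒳^m(ω) converges to X in the Fell sense, i.e., for every compact K ⊆ ℝ^n with X ∩ K = ∅ one has 𝒳^m(ω) ∩ K = ∅ for all sufficiently large m, and for every open G ⊆ ℝ^n with X ∩ G ≠ ∅ one has 𝒳^m(ω) ∩ G ≠ ∅ for all sufficiently large m; (b) both conditions hold: (C1) for every compact K ⊆ ℝ^n with X ∩ K = ∅, ℙ(𝒳^m ∩ K ≠ ∅ for infinitely many m) = 0, and (C2) for every open G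 ⊆ ℝ^n with X ∩ G ≠ ∅, ℙ(𝒳^m ∩ G = ∅ for infinitely many m) = 0. -/
/-!
Fell convergence only has to be tested on countably many sets: for a countable basis `B`, on the
open sets `b ∈ B` (a hitting open set contains a basic one that is still hit) and on the compact
closures `closure b` (a compact set missing `X` is covered by finitely many basic sets whose
closures are compact and miss `X`). Each of these countably many conditions holds almost surely by
(C1) and (C2), hence so do all of them at once.
-/

open MeasureTheory Set Filter TopologicalSpace Topology

section Fell

variable {ι E : Type*} [TopologicalSpace E]

def FellTendsto (l : Filter ι) (F : ι → Set E) (X : Set E) : Prop :=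
  (∀ K, IsCompact K → X ∩ K = ∅ → ∀ᶠ i in l, F i ∩ K = ∅) ∧
    ∀ G, IsOpen G → (X ∩ G).Nonempty → ∀ᶠ i in l, (F i ∩ G).Nonempty

theorem TopologicalSpace.IsTopologicalBasis.exists_isCompact_closure_subset [RegularSpace E]
    [WeaklyLocallyCompactSpace E] {B : Set (Set E)} (hB : IsTopologicalBasis B) {x : E}
    {s : Set E} (hs : s ∈ 𝓝 x) : ∃ b ∈ B, x ∈ b ∧ IsCompact (closure b) ∧ closure b ⊆ s := by
  obtain ⟨C, hC, hCx⟩ := exists_compact_mem_nhds x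
  obtain ⟨b, hbB, hxb, hbs⟩ := hB.exists_closure_subset (inter_mem hs hCx)
  exact ⟨b, hbB, hxb, hC.of_isClosed_subset isClosed_closure (hbs.trans inter_subset_right),
    hbs.trans inter_subset_left⟩

theorem fellTendsto_of_isTopologicalBasis [RegularSpace E] [WeaklyLocallyCompactSpace E]
    {l : Filter ι} {F : ι → Set E} {X : Set E} {B : Set (Set E)} (hB : IsTopologicalBasis B)
    (hX : IsClosed X)
    (hmiss : ∀ b ∈ B, IsCompact (closure b) → X ∩ closure b = ∅ → ∀ᶠ i in l, F i ∩ closure b = ∅)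
    (hhit : ∀ b ∈ B, (X ∩ b).Nonempty → ∀ᶠ i in l, (F i ∩ b).Nonempty) :
    FellTendsto l F X := by
  refine ⟨fun K hK hXK => ?_, fun G hG ⟨x, hxX, hxG⟩ => ?_⟩
  · let Good := {b // b ∈ B ∧ IsCompact (closure b) ∧ X ∩ closure b = ∅}
    have hcover : K ⊆ ⋃ b : Good, b.1 := fun x hxK => by
      have hxX : Xᶜ ∈ 𝓝 x := hX.isOpen_compl.mem_nhds fun hxX => hXK.subset ⟨hxX, hxK⟩
      obtain ⟨b, hbB, hxb, hb, hbX⟩ := hB.exists_isCompact_closure_subset hxX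
      exact mem_iUnion.2 ⟨⟨b, hbB, hb, disjoint_iff_inter_eq_empty.1
        (subset_compl_iff_disjoint_left.1 hbX)⟩, hxb⟩
    obtain ⟨t, hKt⟩ := hK.elim_finite_subcover (fun b : Good => b.1) (fun b => hB.isOpen b.2.1)
      hcover
    filter_upwards [(eventually_all_finset t).2 fun b _ => hmiss b.1 b.2.1 b.2.2.1 b.2.2.2]
      with i hi
    refine eq_empty_of_forall_notMem fun y ⟨hyF, hyK⟩ => ?_
    obtain ⟨b, hbt, hyb⟩ := mem_iUnion₂.1 (hKt hyK)
    exact (hi b hbt).subset ⟨hyF, subset_closure hyb⟩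
  · obtain ⟨b, hbB, hxb, hbG⟩ := hB.mem_nhds_iff.1 (hG.mem_nhds hxG)
    filter_upwards [hhit b hbB ⟨x, hxX, hxb⟩] with i hi
    exact hi.mono (inter_subset_inter_right _ hbG)

end Fell

section Probability

variable {Ω : Type*} [MeasurableSpace Ω] {μ : Measure Ω}

theorem exists_measurableSet_measure_eq_one_iff_ae [IsProbabilityMeasure μ] {p : Ω → Prop} :
    (∃ A, MeasurableSet A ∧ μ A = 1 ∧ ∀ ω ∈ A, p ω) ↔ ∀ᵐ ω ∂μ, p ω := by
  refine ⟨fun ⟨A, hA, hA1, hpA⟩ => mem_of_superset ((mem_ae_iff_prob_eq_one hA).2 hA1) hpA,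
    fun h => ?_⟩
  obtain ⟨A, hAae, hA, hpA⟩ := h.exists_measurable_mem
  exact ⟨A, hA, (mem_ae_iff_prob_eq_one hA).1 hAae, hpA⟩

theorem ae_eventually_atTop_iff_measure_infinite_eq_zero {p : ℕ → Ω → Prop} :
    (∀ᵐ ω ∂μ, ∀ᶠ m in atTop, p m ω) ↔ μ {ω | {m | ¬p m ω}.Infinite} = 0 := by
  simp only [ae_iff, not_eventually, Nat.frequently_atTop_iff_infinite]

theorem ae_fellTendsto_iff {ι E : Type*} [TopologicalSpace E] [SecondCountableTopology E]
    [RegularSpace E] [WeaklyLocallyCompactSpace E] {l : Filter ι} {F : ι → Ω → Set E}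
    {X : Set E} (hX : IsClosed X) :
    (∀ᵐ ω ∂μ, FellTendsto l (F · ω) X) ↔
      (∀ K, IsCompact K → X ∩ K = ∅ → ∀ᵐ ω ∂μ, ∀ᶠ i in l, F i ω ∩ K = ∅) ∧
        ∀ G, IsOpen G → (X ∩ G).Nonempty → ∀ᵐ ω ∂μ, ∀ᶠ i in l, (F i ω ∩ G).Nonempty := by
  refine ⟨fun h => ⟨fun K hK hXK => h.mono fun ω hω => hω.1 K hK hXK,
    fun G hG hXG => h.mono fun ω hω => hω.2 G hG hXG⟩, fun ⟨hC1, hC2⟩ => ?_⟩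
  have hmiss : ∀ᵐ ω ∂μ, ∀ b ∈ countableBasis E, IsCompact (closure b) →
      X ∩ closure b = ∅ → ∀ᶠ i in l, F i ω ∩ closure b = ∅ :=
    (ae_ball_iff (countable_countableBasis E)).2 fun b _ =>
      eventually_imp_distrib_left.2 fun hb => eventually_imp_distrib_left.2 (hC1 _ hb)
  have hhit : ∀ᵐ ω ∂μ, ∀ b ∈ countableBasis E, (X ∩ b).Nonempty →
      ∀ᶠ i in l, (F i ω ∩ b).Nonempty :=
    (ae_ball_iff (countable_countableBasis E)).2 fun b hb =>
      eventually_imp_distrib_left.2 (hC2 _ ((isBasis_countableBasis E).isOpen hb))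
  filter_upwards [hmiss, hhit] with ω using fellTendsto_of_isTopologicalBasis
    (isBasis_countableBasis E) hX

end Probability

theorem random_closed_sets_converge_iff_C1_C2_general
    {n : ℕ} {Ω : Type*} [MeasurableSpace Ω] (ℙ : Measure Ω) [IsProbabilityMeasure ℙ]
    (𝒳 : ℕ → Ω → Set (Fin n → ℝ))
    (X : Set (Fin n → ℝ)) (hX : IsClosed X) :
    (∃ A : Set Ω, MeasurableSet A ∧ ℙ A = 1 ∧
        ∀ ω ∈ A,
          (∀ K : Set (Fin n → ℝ), IsCompact K → X ∩ K = ∅ →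
            ∀ᶠ m in atTop, 𝒳 m ω ∩ K = ∅) ∧
          (∀ G : Set (Fin n → ℝ), IsOpen G → (X ∩ G).Nonempty →
            ∀ᶠ m in atTop, (𝒳 m ω ∩ G).Nonempty))
    ↔
    ((∀ K : Set (Fin n → ℝ), IsCompact K → X ∩ K = ∅ →
        ℙ {ω | {m : ℕ | (𝒳 m ω ∩ K).Nonempty}.Infinite} = 0) ∧
     (∀ G : Set (Fin n → ℝ), IsOpen G → (X ∩ G).Nonempty →
        ℙ {ω | {m : ℕ | 𝒳 m ω ∩ G = ∅}.Infinite} = 0)) := by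
  refine (exists_measurableSet_measure_eq_one_iff_ae.trans (ae_fellTendsto_iff hX)).trans
    (and_congr (forall₃_congr fun K _ _ => ?_) (forall₃_congr fun G _ _ => ?_)) <;>
  rw [ae_eventually_atTop_iff_measure_infinite_eq_zero]
  · simp only [← nonempty_iff_ne_empty]
  · simp only [not_nonempty_iff_eq_empty]

/-- Theorem 1 of the paper (Molchanov, Prop. 1.7.23): a sequence of random closed sets
in ℝⁿ almost surely converges in the Fell sense to a deterministic closed set `X`
iff conditions (C1) and (C2) hold. -/
theorem random_closed_sets_converge_iff_C1_C2
    {n : ℕ} {Ω : Type*} [MeasurableSpace Ω] (ℙ : Measure Ω) [IsProbabilityMeasure ℙ]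
    (𝒳 : ℕ → Ω → Set (Fin n → ℝ))
    (hclosed : ∀ m ω, IsClosed (𝒳 m ω))
    (hmeas : ∀ (m : ℕ) (K : Set (Fin n → ℝ)), IsCompact K →
      MeasurableSet {ω | (𝒳 m ω ∩ K).Nonempty})
    (X : Set (Fin n → ℝ)) (hX : IsClosed X) :
    (∃ A : Set Ω, MeasurableSet A ∧ ℙ A = 1 ∧
        ∀ ω ∈ A,
          (∀ K : Set (Fin n → ℝ), IsCompact K → X ∩ K = ∅ →
            ∀ᶠ m in atTop, 𝒳 m ω ∩ K = ∅) ∧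
          (∀ G : Set (Fin n → ℝ), IsOpen G → (X ∩ G).Nonempty →
            ∀ᶠ m in atTop, (𝒳 m ω ∩ G).Nonempty))
    ↔
    ((∀ K : Set (Fin n → ℝ), IsCompact K → X ∩ K = ∅ →
        ℙ {ω | {m : ℕ | (𝒳 m ω ∩ K).Nonempty}.Infinite} = 0) ∧
     (∀ G : Set (Fin n → ℝ), IsOpen G → (X ∩ G).Nonempty →
        ℙ {ω | {m : ℕ | 𝒳 m ω ∩ G = ∅}.Infinite} = 0)) :=
  random_closed_sets_converge_iff_C1_C2_general ℙ 𝒳 X hX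
end

section
/- Let Q ∈ ℝ^{n×n} be symmetric positive definite and μ, x ∈ ℝ^n with (x − μ)ᵀ Q⁻¹ (x − μ) ≤ 1. Let h(y) = A y + b with A ∈ ℝ^{n×n} invertible and b ∈ ℝ^n, and let g : ℝ^n → ℝ^n satisfy the componentwise Lipschitz bounds |g_i(y) − g_i(y')| ≤ L_i ‖y − y'‖₂ for all y, y' ∈ ℝ^n, with L_i > 0 for every i. Define Q_nom := A Q Aᵀ, Q_g := n · diag(L₁² λ_max(Q), …, L_n² λ_max(Q)) where λ_max(Q) is the largest eigenvalue of Q, c := √(Tr(Q_nom)/Tr(Q_g)), and Q⁺ := ((c+1)/c)·Q_nom + (1+c)·Q_g. Then h(x) + g(x) ∈ B(h(μ) + g(μ), Q⁺), i.e., (h(x)+g(x) − h(μ) − g(μ))ᵀ (Q⁺)⁻¹ (h(x)+g(x) − h(μ) − g(μ)) ≤ 1. -/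
open Matrix

/-!
An ellipsoid is determined by its support function: `u ∈ B(0, M)` iff `(u ⬝ z)² ≤ zᵀ M z` for
all `z`. Since `(a + b)² ≤ (1 + 1/c) a² + (1 + c) b²` for `c > 0`, this shows that the Minkowski
sum of `B(0, M)` and `B(0, N)` lies in `B(0, (1 + 1/c) M + (1 + c) N)`. The affine part maps
`B(μ, Q)` onto `B(Aμ + b, A Q Aᵀ)`. For the Lipschitz part, `B(μ, Q)` lies in the Euclidean ball
of radius `√λ_max(Q)`, so `|gᵢ(x) - gᵢ(μ)| ≤ Lᵢ √λ_max(Q)`, and this box lies in the ellipsoid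
with matrix `n · diag(Lᵢ² λ_max(Q))`.
-/

variable {ι : Type*} [Fintype ι]

theorem Matrix.PosSemidef.sq_dotProduct_mulVec_le {M : Matrix ι ι ℝ} (hM : M.PosSemidef)
    (x y : ι → ℝ) : (x ⬝ᵥ M *ᵥ y) ^ 2 ≤ (x ⬝ᵥ M *ᵥ x) * (y ⬝ᵥ M *ᵥ y) := by
  let _ := M.toSeminormedAddCommGroup hM
  let _ := M.toInnerProductSpace hM
  have hcs := real_inner_mul_inner_self_le x y
  change (M *ᵥ y ⬝ᵥ star x) * (M *ᵥ y ⬝ᵥ star x) ≤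
    (M *ᵥ x ⬝ᵥ star x) * (M *ᵥ y ⬝ᵥ star y) at hcs
  simpa only [star_trivial, dotProduct_comm (M *ᵥ _), sq] using hcs

theorem Matrix.IsHermitian.posSemidef_smul_one_sub [DecidableEq ι] {Q : Matrix ι ι ℝ}
    (hQ : Q.IsHermitian) {r : ℝ} (hr : ∀ i, hQ.eigenvalues i ≤ r) :
    (r • 1 - Q).PosSemidef := by
  set U : Matrix ι ι ℝ := (hQ.eigenvectorUnitary : Matrix ι ι ℝ)
  have hdiff : r • 1 - Q = U * diagonal (fun i => r - hQ.eigenvalues i) * star U := by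
    have hdiag :
        diagonal (fun i => r - hQ.eigenvalues i) = r • 1 - diagonal hQ.eigenvalues := by
      rw [← diagonal_sub, smul_one_eq_diagonal]
    conv_lhs => rw [hQ.spectral_theorem, Unitary.conjStarAlgAut_apply]
    simp [hdiag, mul_sub, sub_mul, U]
  rw [hdiff, Unitary.isUnit_coe.posSemidef_star_right_conjugate_iff, posSemidef_diagonal_iff]
  exact fun i => sub_nonneg.2 (hr i)

theorem Matrix.IsHermitian.dotProduct_mulVec_le_of_eigenvalues_le [DecidableEq ι]
    {Q : Matrix ι ι ℝ} (hQ : Q.IsHermitian) {r : ℝ} (hr : ∀ i, hQ.eigenvalues i ≤ r)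
    (z : ι → ℝ) : z ⬝ᵥ Q *ᵥ z ≤ r * (z ⬝ᵥ z) := by
  have h := (hQ.posSemidef_smul_one_sub hr).dotProduct_mulVec_nonneg z
  simp only [star_trivial, sub_mulVec, smul_mulVec, one_mulVec, dotProduct_sub,
    dotProduct_smul, smul_eq_mul] at h
  linarith

variable [DecidableEq ι]

def ellipsoid (μ : ι → ℝ) (Q : Matrix ι ι ℝ) : Set (ι → ℝ) :=
  {x | (x - μ) ⬝ᵥ Q⁻¹ *ᵥ (x - μ) ≤ 1}

theorem mem_ellipsoid {x μ : ι → ℝ} {Q : Matrix ι ι ℝ} :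
    x ∈ ellipsoid μ Q ↔ (x - μ) ⬝ᵥ Q⁻¹ *ᵥ (x - μ) ≤ 1 :=
  Iff.rfl

theorem mem_ellipsoid_iff_forall_sq_dotProduct_le {x μ : ι → ℝ} {M : Matrix ι ι ℝ}
    (hM : M.PosDef) : x ∈ ellipsoid μ M ↔ ∀ z, ((x - μ) ⬝ᵥ z) ^ 2 ≤ z ⬝ᵥ M *ᵥ z := by
  have hdet : IsUnit M.det := hM.det_pos.ne'.isUnit
  have hinv_nonneg : 0 ≤ (x - μ) ⬝ᵥ M⁻¹ *ᵥ (x - μ) := by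
    simpa using hM.inv.posSemidef.dotProduct_mulVec_nonneg (x - μ)
  rw [mem_ellipsoid]
  constructor
  · intro hx z
    have hcs := hM.inv.posSemidef.sq_dotProduct_mulVec_le (x - μ) (M *ᵥ z)
    rw [mulVec_mulVec, nonsing_inv_mul M hdet, one_mulVec, dotProduct_comm (M *ᵥ z)] at hcs
    have hz : 0 ≤ z ⬝ᵥ M *ᵥ z := by simpa using hM.posSemidef.dotProduct_mulVec_nonneg z
    nlinarith
  · intro hx
    have h := hx (M⁻¹ *ᵥ (x - μ))
    rw [mulVec_mulVec, mul_nonsing_inv M hdet, one_mulVec, dotProduct_comm (M⁻¹ *ᵥ _)] at h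
    nlinarith

theorem mulVec_add_mem_ellipsoid {x μ : ι → ℝ} {Q A : Matrix ι ι ℝ} (hA : IsUnit A.det)
    (b : ι → ℝ) (hx : x ∈ ellipsoid μ Q) :
    A *ᵥ x + b ∈ ellipsoid (A *ᵥ μ + b) (A * Q * Aᵀ) := by
  have hAt : IsUnit Aᵀ.det := by rwa [det_transpose]
  have hconj : Aᵀ * (A * Q * Aᵀ)⁻¹ * A = Q⁻¹ := by
    simp only [Matrix.mul_inv_rev, Matrix.mul_assoc, nonsing_inv_mul A hA, Matrix.mul_one]
    rw [← Matrix.mul_assoc, mul_nonsing_inv Aᵀ hAt, Matrix.one_mul]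
  have hquad : ∀ (M : Matrix ι ι ℝ) u,
      A *ᵥ u ⬝ᵥ M *ᵥ (A *ᵥ u) = u ⬝ᵥ (Aᵀ * M * A) *ᵥ u := by
    intro M u
    rw [← mulVec_mulVec, ← mulVec_mulVec, dotProduct_mulVec _ Aᵀ, vecMul_transpose]
  rwa [mem_ellipsoid, add_sub_add_right_eq_sub, ← mulVec_sub, hquad, hconj]

theorem add_mem_ellipsoid_add {x y μ ν : ι → ℝ} {M N : Matrix ι ι ℝ} (hM : M.PosDef)
    (hN : N.PosDef) {c : ℝ} (hc : 0 < c) (hx : x ∈ ellipsoid μ M) (hy : y ∈ ellipsoid ν N) :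
    x + y ∈ ellipsoid (μ + ν) (((c + 1) / c) • M + (1 + c) • N) := by
  have hsum : (((c + 1) / c) • M + (1 + c) • N).PosDef :=
    (hM.smul (by positivity)).add (hN.smul (by positivity))
  rw [mem_ellipsoid_iff_forall_sq_dotProduct_le hM] at hx
  rw [mem_ellipsoid_iff_forall_sq_dotProduct_le hN] at hy
  rw [mem_ellipsoid_iff_forall_sq_dotProduct_le hsum]
  intro z
  set a := (x - μ) ⬝ᵥ z
  set b := (y - ν) ⬝ᵥ z
  have hweighted :
      ((c + 1) / c) * a ^ 2 + (1 + c) * b ^ 2 - (a + b) ^ 2 = (a - c * b) ^ 2 / c := by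
    field_simp
    ring
  calc ((x + y - (μ + ν)) ⬝ᵥ z) ^ 2 = (a + b) ^ 2 := by
        rw [add_sub_add_comm, add_dotProduct]
    _ ≤ ((c + 1) / c) * a ^ 2 + (1 + c) * b ^ 2 := by
        have : 0 ≤ (a - c * b) ^ 2 / c := by positivity
        linarith
    _ ≤ ((c + 1) / c) * (z ⬝ᵥ M *ᵥ z) + (1 + c) * (z ⬝ᵥ N *ᵥ z) := by
        gcongr
        exacts [hx z, hy z]
    _ = z ⬝ᵥ (((c + 1) / c) • M + (1 + c) • N) *ᵥ z := by
        simp only [add_mulVec, smul_mulVec, dotProduct_add, dotProduct_smul, smul_eq_mul]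

theorem dotProduct_sub_self_le_of_mem_ellipsoid {x μ : ι → ℝ} {Q : Matrix ι ι ℝ}
    (hQ : Q.PosDef) {r : ℝ} (hr : ∀ i, hQ.1.eigenvalues i ≤ r) (hr₀ : 0 ≤ r)
    (hx : x ∈ ellipsoid μ Q) : (x - μ) ⬝ᵥ (x - μ) ≤ r := by
  have hsq := (mem_ellipsoid_iff_forall_sq_dotProduct_le hQ).1 hx (x - μ)
  have hray := hQ.1.dotProduct_mulVec_le_of_eigenvalues_le hr (x - μ)
  have hnonneg : 0 ≤ (x - μ) ⬝ᵥ (x - μ) := by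
    simpa using dotProduct_self_star_nonneg (x - μ)
  nlinarith

theorem mem_ellipsoid_card_smul_diagonal {x μ d : ι → ℝ} (hd : ∀ i, 0 < d i)
    (hx : ∀ i, (x i - μ i) ^ 2 ≤ d i) :
    x ∈ ellipsoid μ ((Fintype.card ι : ℝ) • diagonal d) := by
  cases isEmpty_or_nonempty ι
  · simp [mem_ellipsoid, dotProduct]
  set N : ℝ := (Fintype.card ι : ℝ)
  have hN : 0 < N := by positivity
  have hinv : (N • diagonal d)⁻¹ = diagonal fun i => (N * d i)⁻¹ := by
    refine inv_eq_right_inv ?_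
    rw [← diagonal_smul, diagonal_mul_diagonal, ← diagonal_one]
    congr 1
    ext i
    exact mul_inv_cancel₀ (mul_pos hN (hd i)).ne'
  calc (x - μ) ⬝ᵥ (N • diagonal d)⁻¹ *ᵥ (x - μ) = ∑ i, (x i - μ i) ^ 2 / d i * N⁻¹ := by
        simp only [hinv, mulVec_diagonal, dotProduct, Pi.sub_apply]
        exact Finset.sum_congr rfl fun i _ => by ring
    _ ≤ ∑ _i : ι, N⁻¹ := Finset.sum_le_sum fun i _ =>
        mul_le_of_le_one_left (by positivity) (div_le_one_of_le₀ (hx i) (hd i).le)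
    _ = 1 := by simp [N]

theorem mem_ellipsoid_of_lipschitz {x μ : ι → ℝ} {g : (ι → ℝ) → ι → ℝ} {L : ι → ℝ}
    (hL : ∀ i, 0 < L i) (hg : ∀ i, |g x i - g μ i| ≤ L i * √((x - μ) ⬝ᵥ (x - μ))) {r : ℝ}
    (hr : 0 < r) (hxμ : (x - μ) ⬝ᵥ (x - μ) ≤ r) :
    g x ∈ ellipsoid (g μ) ((Fintype.card ι : ℝ) • diagonal fun i => L i ^ 2 * r) := by
  refine mem_ellipsoid_card_smul_diagonal (fun i => mul_pos (pow_pos (hL i) 2) hr) fun i => ?_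
  calc (g x i - g μ i) ^ 2 = |g x i - g μ i| ^ 2 := (sq_abs _).symm
    _ ≤ (L i * √((x - μ) ⬝ᵥ (x - μ))) ^ 2 := by gcongr; exact hg i
    _ = L i ^ 2 * ((x - μ) ⬝ᵥ (x - μ)) := by
        rw [mul_pow, Real.sq_sqrt (by simpa using dotProduct_self_star_nonneg (x - μ))]
    _ ≤ L i ^ 2 * r := by gcongr

/-- Soundness of one step of the Lipschitz-based ellipsoidal propagation of
Koller et al. (as implemented in the paper's Appendix): if `x ∈ B(μ, Q)`,
`h` is affine and `g` is componentwise Lipschitz, then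
`h(x) + g(x) ∈ B(h(μ) + g(μ), Q⁺)`. -/
theorem lipschitz_ellipsoidal_propagation_sound
    {n : ℕ} (Q : Matrix (Fin n) (Fin n) ℝ) (hQ : Q.PosDef)
    (μ x : Fin n → ℝ)
    (hx : (x - μ) ⬝ᵥ Q⁻¹ *ᵥ (x - μ) ≤ 1)
    (A : Matrix (Fin n) (Fin n) ℝ) (hA : IsUnit A.det) (b : Fin n → ℝ)
    (h : (Fin n → ℝ) → (Fin n → ℝ)) (hh : ∀ y, h y = A *ᵥ y + b)
    (g : (Fin n → ℝ) → (Fin n → ℝ))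
    (L : Fin n → ℝ) (hL : ∀ i, 0 < L i)
    (hg : ∀ y y' i, |g y i - g y' i| ≤ L i * Real.sqrt ((y - y') ⬝ᵥ (y - y')))
    (lmax : ℝ) (hlmax : IsGreatest (Set.range hQ.1.eigenvalues) lmax)
    (Qnom Qg Qplus : Matrix (Fin n) (Fin n) ℝ) (c : ℝ)
    (hQnom : Qnom = A * Q * Aᵀ)
    (hQg : Qg = (n : ℝ) • Matrix.diagonal (fun i => (L i) ^ 2 * lmax))
    (hc : c = Real.sqrt (Qnom.trace / Qg.trace))
    (hQplus : Qplus = ((c + 1) / c) • Qnom + (1 + c) • Qg) :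
    (h x + g x - h μ - g μ) ⬝ᵥ Qplus⁻¹ *ᵥ (h x + g x - h μ - g μ) ≤ 1 := by
  cases isEmpty_or_nonempty (Fin n)
  · simp [dotProduct]
  have hlmax_pos : 0 < lmax := by
    obtain ⟨i, rfl⟩ := hlmax.1
    exact hQ.eigenvalues_pos i
  have hQnom_pd : Qnom.PosDef := by
    have hA_inj : Function.Injective A.vecMul :=
      vecMul_injective_iff_isUnit.2 ((isUnit_iff_isUnit_det A).2 hA)
    simpa [hQnom] using hQ.mul_mul_conjTranspose_same hA_inj
  have hQg_pd : Qg.PosDef := hQg ▸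
    (PosDef.diagonal fun i => mul_pos (pow_pos (hL i) 2) hlmax_pos).smul (Nat.cast_pos.2 Fin.pos')
  have hc_pos : 0 < c := hc ▸ Real.sqrt_pos.2 (div_pos hQnom_pd.trace_pos hQg_pd.trace_pos)
  have hhx : h x ∈ ellipsoid (h μ) Qnom := by
    simpa only [hh, hQnom] using mulVec_add_mem_ellipsoid hA b hx
  have hgx : g x ∈ ellipsoid (g μ) Qg := by
    have hball := dotProduct_sub_self_le_of_mem_ellipsoid hQ (fun i => hlmax.2 ⟨i, rfl⟩)
      hlmax_pos.le hx
    simpa only [hQg, Fintype.card_fin] using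
      mem_ellipsoid_of_lipschitz hL (hg x μ) hlmax_pos hball
  have hsum := add_mem_ellipsoid_add hQnom_pd hQg_pd hc_pos hhx hgx
  rwa [← hQplus, mem_ellipsoid, ← sub_sub] at hsum
end
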